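/- Let G be a countable discrete abelian group acting on H = L²(E, λ|_E) and K = L²(F, λ|_F) by multiplication by characters, with frame vectors v ∈ H and w ∈ K. Then the range of the analysis operator Θ_v (as a subspace of ℓ²(G)) is contained in the range of Θ_w if and only if E ⊆ F modulo λ-null sets. -/

import Mathlib

/-!
If `Θ_v v` lies in the range of `Θ_w`, say `Θ_v v = Θ_w h`, then `|v|²` and `h · conj w` have
the same Fourier coefficients, hence agree a.e. by completeness of the characters; on `E \ F`
the second vanishes while the first is bounded below, so `E \ F` is null. Conversely, if `E ⊆ F`
a.e. then `Θ_v h = Θ_w (h · conj v / conj w)`, and the frame bounds make `h · conj v / conj w`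
square integrable.
-/

open MeasureTheory ComplexConjugate

section

variable {X G : Type*} [MeasurableSpace X] {μ : Measure X}

lemma mul_conj_mul_eq (a b c : ℂ) : a * conj (b * c) = a * conj c * conj b := by
  rw [map_mul]; ring

lemma MeasureTheory.MemLp.mul_conj_of_ae_norm_le {f u : X → ℂ} {c : ℝ} (hf : MemLp f 2 μ)
    (hu : AEStronglyMeasurable u μ) (hbound : ∀ᵐ t ∂μ, ‖u t‖ ≤ c) :
    MemLp (fun t => f t * conj (u t)) 2 μ := by
  refine hf.of_le_mul (c := c) (hf.1.mul (Complex.continuous_conj.comp_aestronglyMeasurable hu)) ?_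
  filter_upwards [hbound] with t ht
  rw [norm_mul, RCLike.norm_conj, mul_comm]
  exact mul_le_mul_of_nonneg_right ht (norm_nonneg _)

section Characters

variable [IsFiniteMeasure μ] {χ : G → X → ℂ}

lemma integrable_mul_conj_of_norm_eq_one (hmeas : ∀ g, Measurable (χ g))
    (hunit : ∀ g x, ‖χ g x‖ = 1) {f : X → ℂ} (hf : MemLp f 2 μ) (g : G) :
    Integrable (fun t => f t * conj (χ g t)) μ :=
  (hf.mul_conj_of_ae_norm_le (hmeas g).aestronglyMeasurable
    (.of_forall fun t => (hunit g t).le)).integrable one_le_two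

lemma ae_eq_of_integral_mul_conj_eq (hmeas : ∀ g, Measurable (χ g))
    (hunit : ∀ g x, ‖χ g x‖ = 1)
    (hcomp : ∀ f : X → ℂ, MemLp f 2 μ →
      (∀ g : G, ∫ x, f x * conj (χ g x) ∂μ = 0) → f =ᵐ[μ] 0)
    {f₁ f₂ : X → ℂ} (hf₁ : MemLp f₁ 2 μ) (hf₂ : MemLp f₂ 2 μ)
    (hcoeff : ∀ g, ∫ t, f₁ t * conj (χ g t) ∂μ = ∫ t, f₂ t * conj (χ g t) ∂μ) :
    f₁ =ᵐ[μ] f₂ := by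
  have hzero := hcomp (f₁ - f₂) (hf₁.sub hf₂) fun g => by
    simp only [Pi.sub_apply, sub_mul]
    rw [integral_sub (integrable_mul_conj_of_norm_eq_one hmeas hunit hf₁ g)
      (integrable_mul_conj_of_norm_eq_one hmeas hunit hf₂ g), hcoeff g, sub_self]
  filter_upwards [hzero] with t ht
  exact sub_eq_zero.mp ht

end Characters

section Frame

variable {E : Set X} {v : X → ℂ} {C₁ C₂ : ℝ}

lemma ae_norm_le_sqrt_of_frame (hsupp : ∀ᵐ t ∂μ, t ∉ E → v t = 0)
    (hframe : ∀ᵐ t ∂(μ.restrict E), C₁ ≤ ‖v t‖ ^ 2 ∧ ‖v t‖ ^ 2 ≤ C₂) :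
    ∀ᵐ t ∂μ, ‖v t‖ ≤ √C₂ := by
  filter_upwards [ae_imp_of_ae_restrict hframe, hsupp] with t hE hnE
  by_cases ht : t ∈ E
  · exact Real.le_sqrt_of_sq_le (hE ht).2
  · simp [hnE ht]

lemma ae_sqrt_le_norm_of_frame
    (hframe : ∀ᵐ t ∂(μ.restrict E), C₁ ≤ ‖v t‖ ^ 2 ∧ ‖v t‖ ^ 2 ≤ C₂) :
    ∀ᵐ t ∂μ, t ∈ E → √C₁ ≤ ‖v t‖ := by
  filter_upwards [ae_imp_of_ae_restrict hframe] with t hE ht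
  exact Real.sqrt_le_iff.mpr ⟨norm_nonneg _, (hE ht).1⟩

end Frame

lemma measure_diff_eq_zero_of_mul_conj_ae_eq {E F : Set X} {v w h : X → ℂ}
    (hv : ∀ᵐ t ∂μ, t ∈ E → v t ≠ 0) (hw : ∀ᵐ t ∂μ, t ∉ F → w t = 0)
    (heq : (fun t => v t * conj (v t)) =ᵐ[μ] fun t => h t * conj (w t)) :
    μ (E \ F) = 0 := by
  refine measure_eq_zero_iff_ae_notMem.mpr ?_
  filter_upwards [hv, hw, heq] with t hvt hwt heqt ⟨htE, htF⟩
  rw [hwt htF, map_zero, mul_zero, mul_eq_zero, map_eq_zero, or_self] at heqt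
  exact hvt htE heqt

section Quotient

variable {h v w : X → ℂ} {a b : ℝ}

lemma mul_conj_div_conj_mul_conj_ae_eq (hhw : ∀ᵐ t ∂μ, h t ≠ 0 → w t ≠ 0) :
    (fun t => h t * conj (v t) / conj (w t) * conj (w t)) =ᵐ[μ] fun t => h t * conj (v t) := by
  filter_upwards [hhw] with t ht
  by_cases h0 : h t = 0
  · simp [h0]
  · exact div_mul_cancel₀ _ ((map_ne_zero _).mpr (ht h0))

lemma memLp_mul_conj_div_conj (hh : MemLp h 2 μ) (hv : AEStronglyMeasurable v μ)
    (hw : AEStronglyMeasurable w μ) (hb : 0 < b) (hva : ∀ᵐ t ∂μ, ‖v t‖ ≤ a)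
    (hwb : ∀ᵐ t ∂μ, h t ≠ 0 → b ≤ ‖w t‖) :
    MemLp (fun t => h t * conj (v t) / conj (w t)) 2 μ := by
  have hmeas : AEStronglyMeasurable (fun t => h t * conj (v t) / conj (w t)) μ :=
    ((hh.1.aemeasurable.mul (Complex.continuous_conj.measurable.comp_aemeasurable hv.aemeasurable)).div
      (Complex.continuous_conj.measurable.comp_aemeasurable hw.aemeasurable)).aestronglyMeasurable
  refine hh.of_le_mul (c := a / b) hmeas ?_
  filter_upwards [hva, hwb] with t hvt hwt
  by_cases h0 : h t = 0
  · simp [h0]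
  have hwt := hwt h0
  rw [norm_div, norm_mul, RCLike.norm_conj, RCLike.norm_conj, mul_div_assoc, mul_comm]
  exact mul_le_mul_of_nonneg_right (div_le_div₀ ((norm_nonneg _).trans hvt) hvt hb hwt)
    (norm_nonneg _)

end Quotient

end

theorem stmt3 {G X : Type*} [MeasurableSpace X]
    (μ : Measure X) [IsProbabilityMeasure μ]
    (χ : G → X → ℂ)
    (hmeas : ∀ g, Measurable (χ g))
    (hunit : ∀ g x, ‖χ g x‖ = 1)
    (hcomp : ∀ f : X → ℂ, MemLp f 2 μ →
      (∀ g : G, ∫ x, f x * conj (χ g x) ∂μ = 0) → f =ᵐ[μ] 0)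
    (E F : Set X)
    (v w : X → ℂ) (hv : MemLp v 2 μ) (hw : MemLp w 2 μ)
    (hvsupp : ∀ᵐ t ∂μ, t ∉ E → v t = 0) (hwsupp : ∀ᵐ t ∂μ, t ∉ F → w t = 0)
    -- v and w are frame vectors: |v|², |w|² bounded above and below a.e. on E, F
    (hvframe : ∃ C₁ C₂ : ℝ, 0 < C₁ ∧ C₁ ≤ C₂ ∧
      ∀ᵐ t ∂(μ.restrict E), C₁ ≤ ‖v t‖ ^ 2 ∧ ‖v t‖ ^ 2 ≤ C₂)
    (hwframe : ∃ C₁ C₂ : ℝ, 0 < C₁ ∧ C₁ ≤ C₂ ∧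
      ∀ᵐ t ∂(μ.restrict F), C₁ ≤ ‖w t‖ ^ 2 ∧ ‖w t‖ ^ 2 ≤ C₂) :
    ({a : G → ℂ | ∃ h : X → ℂ, MemLp h 2 μ ∧ (∀ᵐ t ∂μ, t ∉ E → h t = 0) ∧
        a = fun g => ∫ t, h t * conj (χ g t * v t) ∂μ} ⊆
      {b : G → ℂ | ∃ h : X → ℂ, MemLp h 2 μ ∧ (∀ᵐ t ∂μ, t ∉ F → h t = 0) ∧
        b = fun g => ∫ t, h t * conj (χ g t * w t) ∂μ})
    ↔ μ (E \ F) = 0 := by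
  obtain ⟨A₁, A₂, hA₁, -, hvfr⟩ := hvframe
  obtain ⟨B₁, B₂, hB₁, -, hwfr⟩ := hwframe
  have hvA₂ := ae_norm_le_sqrt_of_frame hvsupp hvfr
  have hwB₂ := ae_norm_le_sqrt_of_frame hwsupp hwfr
  have hwB₁ := ae_sqrt_le_norm_of_frame hwfr
  constructor
  · intro hsub
    obtain ⟨h, hh, -, hcoeff⟩ := hsub ⟨v, hv, hvsupp, rfl⟩
    refine measure_diff_eq_zero_of_mul_conj_ae_eq ?_ hwsupp <|
      ae_eq_of_integral_mul_conj_eq hmeas hunit hcomp (hv.mul_conj_of_ae_norm_le hv.1 hvA₂)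
        (hh.mul_conj_of_ae_norm_le hw.1 hwB₂) fun g => by
          simpa only [mul_conj_mul_eq] using congrFun hcoeff g
    filter_upwards [ae_sqrt_le_norm_of_frame hvfr] with t ht htE
    exact norm_pos_iff.mp ((Real.sqrt_pos.mpr hA₁).trans_le (ht htE))
  · rintro hEF _ ⟨h, hh, hhE, rfl⟩
    have hhw : ∀ᵐ t ∂μ, h t ≠ 0 → √B₁ ≤ ‖w t‖ := by
      filter_upwards [hhE, hwB₁, measure_eq_zero_iff_ae_notMem.mp hEF] with t hhE hwt hEF h0
      exact hwt (by_contra fun htF => hEF ⟨by_contra (h0 <| hhE ·), htF⟩)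
    refine ⟨fun t => h t * conj (v t) / conj (w t),
      memLp_mul_conj_div_conj hh hv.1 hw.1 (Real.sqrt_pos.mpr hB₁) hvA₂ hhw, ?_, ?_⟩
    · filter_upwards [hwsupp] with t hwt htF
      simp [hwt htF]
    · have hquot := mul_conj_div_conj_mul_conj_ae_eq (v := v) <| by
        filter_upwards [hhw] with t ht h0
        exact norm_pos_iff.mp ((Real.sqrt_pos.mpr hB₁).trans_le (ht h0))
      funext g
      simp only [mul_conj_mul_eq]
      exact integral_congr_ae <| by
        filter_upwards [hquot] with t ht
        rw [ht]
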